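/- arXiv:2011.12894 — 3 statements merged into one kernel-verified Lean document; each statement's English description precedes it below -/
import Mathlib

section
/- Let ℓ be a prime and m ≥ 0, n ≥ 1 integers. In GSp₄(ℚ_ℓ) one has the double coset decomposition K^{(1)}_{m,n} · diag(ℓ, ℓ, 1, 1) · K^{(1)}_{m,n} = ⋃_{x,y,z=0}^{ℓ−1} A(x,y,z) · K^{(1)}_{m,n} ∪ ⋃_{x,y=0}^{ℓ−1} B(x,y) · K^{(1)}_{m,n}, where A(x,y,z) is the matrix with rows (ℓ,0,x,y), (0,ℓ,z,x), (0,0,1,0), (0,0,0,1) and B(x,y) is the matrix with rows (ℓ,x,0,y), (0,1,0,0), (0,0,ℓ,−x), (0,0,0,1), and the ℓ³ + ℓ² listed left cosets are pairwise distinct. -/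
open Pointwise

noncomputable section

/-- The standard skew-symmetric matrix `J` defining `GSp₄`. -/
def Jmat (p : ℕ) [Fact p.Prime] : Matrix (Fin 4) (Fin 4) ℚ_[p] :=
  !![0, 0, 0, 1; 0, 0, 1, 0; 0, -1, 0, 0; -1, 0, 0, 0]

/-- The subgroup `K^{(1)}_{m,n}` of `GSp₄(ℤ_ℓ)`: integral symplectic similitudes with
multiplier `μ ≡ 1 (mod ℓ^m)` and entries at positions (2,1), (3,1), (4,1), (4,2), (4,3)
divisible by `ℓⁿ`, viewed inside the 4×4 matrices over `ℚ_ℓ`. -/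
def Kmn1 (p : ℕ) [Fact p.Prime] (m n : ℕ) : Set (Matrix (Fin 4) (Fin 4) ℚ_[p]) :=
  {g | (∀ i j, ‖g i j‖ ≤ 1) ∧ ‖g.det‖ = 1 ∧
    (∃ μ : ℚ_[p], ‖μ‖ = 1 ∧ ‖μ - 1‖ ≤ (p : ℝ) ^ (-(m : ℤ)) ∧
      g.transpose * Jmat p * g = μ • Jmat p) ∧
    ‖g 1 0‖ ≤ (p : ℝ) ^ (-(n : ℤ)) ∧ ‖g 2 0‖ ≤ (p : ℝ) ^ (-(n : ℤ)) ∧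
    ‖g 3 0‖ ≤ (p : ℝ) ^ (-(n : ℤ)) ∧ ‖g 3 1‖ ≤ (p : ℝ) ^ (-(n : ℤ)) ∧
    ‖g 3 2‖ ≤ (p : ℝ) ^ (-(n : ℤ))}

/-- The coset representatives `A(x,y,z)` (for `0 ≤ x,y,z < ℓ`) and `B(x,y)`
(for `0 ≤ x,y < ℓ`). -/
def rep3 (p : ℕ) [Fact p.Prime] :
    (Fin p × Fin p × Fin p) ⊕ (Fin p × Fin p) → Matrix (Fin 4) (Fin 4) ℚ_[p] :=
  Sum.elim
    (fun i => !![(p : ℚ_[p]), 0, ((i.1 : ℕ) : ℚ_[p]), ((i.2.1 : ℕ) : ℚ_[p]);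
                 0, (p : ℚ_[p]), ((i.2.2 : ℕ) : ℚ_[p]), ((i.1 : ℕ) : ℚ_[p]);
                 0, 0, 1, 0;
                 0, 0, 0, 1])
    (fun i => !![(p : ℚ_[p]), ((i.1 : ℕ) : ℚ_[p]), 0, ((i.2 : ℕ) : ℚ_[p]);
                 0, 1, 0, 0;
                 0, 0, (p : ℚ_[p]), -((i.1 : ℕ) : ℚ_[p]);
                 0, 0, 0, 1])

/-!
Indices are 0-based: `a i j` is the paper's entry `(i+1, j+1)`. Write `d = diag(ℓ,ℓ,1,1)`,
`u(x,y,z)` for the unipotent matrix with `A(x,y,z) = u(x,y,z)·d`, and `s` for the Weyl element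
with `B(x,y) = s·u(x,y,0)·d·s⁻¹`.

For `a ∈ K` the `(0,3)` entry of `aᵀJa = μJ` gives `a₀₀a₃₃ ≡ μ (mod ℓ)`, so `a₃₃` is a unit.
Conjugation `M ↦ d⁻¹Md` maps `M ∈ K` into `K` as soon as the upper-right `2×2` block of `M` is
`≡ 0 (mod ℓ)`, so `a·d ∈ u·d·K` whenever `u⁻¹a` has that property. If `a₂₂` is a unit, digits
`x, z, y` solving `a₀₂ ≡ x a₂₂`, `a₁₂ ≡ z a₂₂`, `a₀₃ ≡ x a₂₃ + y a₃₃` exist, and the remaining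
congruence `a₁₃ ≡ z a₂₃ + x a₃₃` is the `(2,3)` entry of the symplectic relation. If `ℓ ∣ a₂₂`,
a similar triangular system for `s⁻¹a` with `z = 0` puts `a·d` into a coset of `B(x,y)`.

The cosets are distinct: `A(x,y,z)⁻¹A(x',y',z') = d⁻¹u(x'-x, y'-y, z'-z)d` is integral only if the
digits agree (two `B`-cosets reduce to this after conjugating by `s`), and `A⁻¹B` has the entry
`ℓ⁻¹` at `(1,1)`.
-/

section Ultrametric

variable {E : Type*} [SeminormedAddCommGroup E] [IsUltrametricDist E]

lemma IsUltrametricDist.norm_add_le_of_le {x y : E} {c : ℝ} (hx : ‖x‖ ≤ c)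
    (hy : ‖y‖ ≤ c) : ‖x + y‖ ≤ c :=
  (norm_add_le_max x y).trans (max_le hx hy)

lemma IsUltrametricDist.norm_sub_le_of_le {x y : E} {c : ℝ} (hx : ‖x‖ ≤ c)
    (hy : ‖y‖ ≤ c) : ‖x - y‖ ≤ c :=
  sub_eq_add_neg x y ▸ norm_add_le_of_le hx (by rwa [norm_neg])

end Ultrametric

lemma norm_mul_le_of_norm_le_one_left {R : Type*} [SeminormedRing R] {x y : R} {c : ℝ}
    (hx : ‖x‖ ≤ 1) (hy : ‖y‖ ≤ c) : ‖x * y‖ ≤ c :=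
  (norm_mul_le x y).trans <| (mul_le_of_le_one_left (norm_nonneg y) hx).trans hy

lemma norm_mul_le_of_norm_le_one_right {R : Type*} [SeminormedRing R] {x y : R} {c : ℝ}
    (hx : ‖x‖ ≤ c) (hy : ‖y‖ ≤ 1) : ‖x * y‖ ≤ c :=
  (norm_mul_le x y).trans <| (mul_le_of_le_one_right (norm_nonneg x) hy).trans hx

namespace Padic

variable {p : ℕ} [Fact p.Prime]

lemma norm_le_inv_of_norm_lt_one {x : ℚ_[p]} (hx : ‖x‖ < 1) : ‖x‖ ≤ (p : ℝ)⁻¹ := by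
  simpa using (norm_le_pow_iff_norm_lt_pow_add_one x (-1)).mpr (by simpa using hx)

lemma norm_natCast_le_one (k : ℕ) : ‖(k : ℚ_[p])‖ ≤ 1 :=
  IsUltrametricDist.norm_natCast_le_one ℚ_[p] k

lemma inv_lt_one_of_prime : (p : ℝ)⁻¹ < 1 :=
  inv_lt_one_of_one_lt₀ (mod_cast (Fact.out : p.Prime).one_lt)

lemma norm_inv_p_mul_le_one_iff {x : ℚ_[p]} :
    ‖(p : ℚ_[p])⁻¹ * x‖ ≤ 1 ↔ ‖x‖ ≤ (p : ℝ)⁻¹ := by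
  have hp : (0 : ℝ) < p := mod_cast (Fact.out : p.Prime).pos
  rw [norm_mul, norm_inv, norm_p, inv_inv, ← le_div_iff₀' hp, one_div]

lemma exists_digit_norm_sub_le {x : ℚ_[p]} (hx : ‖x‖ ≤ 1) :
    ∃ r : Fin p, ‖x - (r : ℕ)‖ ≤ (p : ℝ)⁻¹ := by
  obtain ⟨r, hr, hmem⟩ := PadicInt.exists_mem_range (⟨x, hx⟩ : ℤ_[p])
  exact ⟨⟨r, hr⟩, norm_le_inv_of_norm_lt_one (PadicInt.mem_nonunits.mp hmem)⟩

lemma exists_digit_norm_sub_mul_le {x u : ℚ_[p]} (hx : ‖x‖ ≤ 1) (hu : ‖u‖ = 1) :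
    ∃ r : Fin p, ‖x - (r : ℕ) * u‖ ≤ (p : ℝ)⁻¹ := by
  have hu0 : u ≠ 0 := norm_ne_zero_iff.mp (by rw [hu]; exact one_ne_zero)
  obtain ⟨r, hr⟩ := exists_digit_norm_sub_le (x := x / u) (by rwa [norm_div, hu, div_one])
  refine ⟨r, ?_⟩
  rwa [show x - (r : ℕ) * u = (x / u - (r : ℕ)) * u by field_simp, norm_mul, hu, mul_one]

lemma fin_eq_of_norm_natCast_sub_le {a b : Fin p}
    (h : ‖((a : ℕ) : ℚ_[p]) - (b : ℕ)‖ ≤ (p : ℝ)⁻¹) : a = b := by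
  have hdvd : (p : ℤ) ∣ (b : ℕ) - (a : ℕ) := by
    rw [← norm_intCast_lt_one_iff]; push_cast; rw [norm_sub_rev]
    exact h.trans_lt inv_lt_one_of_prime
  exact Fin.ext ((Nat.modEq_iff_dvd.mpr hdvd).eq_of_lt_of_lt a.2 b.2)

end Padic

open Matrix IsUltrametricDist

namespace GSp4

variable {p : ℕ} [Fact p.Prime] {m n : ℕ} {a b k M : Matrix (Fin 4) (Fin 4) ℚ_[p]}
  {μ ν : ℚ_[p]}

def IsSimilitude (g : Matrix (Fin 4) (Fin 4) ℚ_[p]) (μ : ℚ_[p]) : Prop :=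
  gᵀ * Jmat p * g = μ • Jmat p

lemma IsSimilitude.mul (ha : IsSimilitude a μ) (hb : IsSimilitude b ν) :
    IsSimilitude (a * b) (μ * ν) := by
  unfold IsSimilitude at *
  rw [transpose_mul, show bᵀ * aᵀ * Jmat p * (a * b) = bᵀ * (aᵀ * Jmat p * a) * b by
    simp only [Matrix.mul_assoc], ha, Matrix.mul_smul, Matrix.smul_mul, hb, smul_smul, mul_comm]

lemma IsSimilitude.apply_zero_three (h : IsSimilitude a μ) :
    a 0 0 * a 3 3 + a 1 0 * a 2 3 - a 2 0 * a 1 3 - a 3 0 * a 0 3 = μ := by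
  simpa [Jmat, mul_apply, Fin.sum_univ_four, sub_eq_add_neg, add_comm, add_left_comm, add_assoc,
    mul_comm] using congrFun₂ h 0 3

lemma IsSimilitude.apply_two_three (h : IsSimilitude a μ) :
    a 0 2 * a 3 3 + a 1 2 * a 2 3 - a 2 2 * a 1 3 - a 3 2 * a 0 3 = 0 := by
  simpa [Jmat, mul_apply, Fin.sum_univ_four, sub_eq_add_neg, add_comm, add_left_comm, add_assoc,
    mul_comm] using congrFun₂ h 2 3

-- The paper's positions (2,1), (3,1), (4,1), (4,2), (4,3), which must be divisible by `ℓⁿ`.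
def lowerLeft : Finset (Fin 4 × Fin 4) := {(1, 0), (2, 0), (3, 0), (3, 1), (3, 2)}

lemma mem_Kmn1_iff : a ∈ Kmn1 p m n ↔ (∀ i j, ‖a i j‖ ≤ 1) ∧ ‖a.det‖ = 1 ∧
    (∃ μ : ℚ_[p], ‖μ‖ = 1 ∧ ‖μ - 1‖ ≤ (p : ℝ) ^ (-(m : ℤ)) ∧ IsSimilitude a μ) ∧
    ∀ ij ∈ lowerLeft, ‖a ij.1 ij.2‖ ≤ (p : ℝ) ^ (-(n : ℤ)) := by
  simp [Kmn1, lowerLeft, IsSimilitude]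

lemma mem_lowerLeft_or_mem_lowerLeft :
    ∀ ij ∈ lowerLeft, ∀ k : Fin 4, (ij.1, k) ∈ lowerLeft ∨ (k, ij.2) ∈ lowerLeft := by
  decide

namespace Kmn1

lemma norm_apply_le_one (ha : a ∈ Kmn1 p m n) (i j : Fin 4) : ‖a i j‖ ≤ 1 :=
  (mem_Kmn1_iff.mp ha).1 i j

lemma one_mem : (1 : Matrix (Fin 4) (Fin 4) ℚ_[p]) ∈ Kmn1 p m n := by
  refine mem_Kmn1_iff.mpr ⟨fun i j => ?_, by simp, ⟨1, by simp, by simp, ?_⟩, ?_⟩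
  · rcases eq_or_ne i j with rfl | h <;> simp [one_apply, *]
  · simp [IsSimilitude]
  · intro ij hij
    have : ij.1 ≠ ij.2 := by revert ij; decide
    simp [one_apply_ne this]

lemma mul_mem (ha : a ∈ Kmn1 p m n) (hb : b ∈ Kmn1 p m n) : a * b ∈ Kmn1 p m n := by
  obtain ⟨ha1, hadet, ⟨μ, hμ1, hμm, hμ⟩, haL⟩ := mem_Kmn1_iff.mp ha
  obtain ⟨hb1, hbdet, ⟨ν, hν1, hνm, hν⟩, hbL⟩ := mem_Kmn1_iff.mp hb
  refine mem_Kmn1_iff.mpr ⟨fun i j => ?_, by rw [det_mul, norm_mul, hadet, hbdet, one_mul],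
    ⟨μ * ν, by rw [norm_mul, hμ1, hν1, one_mul], ?_, hμ.mul hν⟩, fun ij hij => ?_⟩
  · rw [mul_apply]
    exact norm_sum_le_of_forall_le_of_nonneg zero_le_one
      fun k _ => norm_mul_le_of_norm_le_one_left (ha1 i k) (hb1 k j)
  · rw [show μ * ν - 1 = μ * (ν - 1) + (μ - 1) by ring]
    exact norm_add_le_of_le (norm_mul_le_of_norm_le_one_left hμ1.le hνm) hμm
  · rw [mul_apply]
    refine norm_sum_le_of_forall_le_of_nonneg (by positivity) fun k _ => ?_
    rcases mem_lowerLeft_or_mem_lowerLeft ij hij k with h | h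
    · exact norm_mul_le_of_norm_le_one_right (haL _ h) (hb1 _ _)
    · exact norm_mul_le_of_norm_le_one_left (ha1 _ _) (hbL _ h)

lemma norm_apply_le_inv (hn : 1 ≤ n) (ha : a ∈ Kmn1 p m n) {ij : Fin 4 × Fin 4}
    (hij : ij ∈ lowerLeft) : ‖a ij.1 ij.2‖ ≤ (p : ℝ)⁻¹ := by
  refine ((mem_Kmn1_iff.mp ha).2.2.2 ij hij).trans ?_
  rw [← _root_.zpow_neg_one]
  exact zpow_le_zpow_right₀ (mod_cast (Fact.out : p.Prime).one_le) (by omega)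

lemma norm_apply_three_three (hn : 1 ≤ n) (ha : a ∈ Kmn1 p m n) : ‖a 3 3‖ = 1 := by
  obtain ⟨ha1, -, ⟨μ, hμ1, -, hμ⟩, -⟩ := mem_Kmn1_iff.mp ha
  by_contra h33
  have h33 : ‖a 3 3‖ ≤ (p : ℝ)⁻¹ :=
    Padic.norm_le_inv_of_norm_lt_one (lt_of_le_of_ne (ha1 3 3) h33)
  have hsmall (ij) (hij : ij ∈ lowerLeft) := norm_apply_le_inv hn ha hij
  have : ‖μ‖ ≤ (p : ℝ)⁻¹ := by
    rw [← hμ.apply_zero_three]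
    refine norm_sub_le_of_le (norm_sub_le_of_le
      (norm_add_le_of_le ?_ ?_) ?_) ?_
    · exact norm_mul_le_of_norm_le_one_left (ha1 0 0) h33
    · exact norm_mul_le_of_norm_le_one_right (hsmall (1, 0) (by decide)) (ha1 2 3)
    · exact norm_mul_le_of_norm_le_one_right (hsmall (2, 0) (by decide)) (ha1 1 3)
    · exact norm_mul_le_of_norm_le_one_right (hsmall (3, 0) (by decide)) (ha1 0 3)
  linarith [Padic.inv_lt_one_of_prime (p := p)]

end Kmn1

def dMat (p : ℕ) [Fact p.Prime] : Matrix (Fin 4) (Fin 4) ℚ_[p] :=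
  diagonal ![(p : ℚ_[p]), (p : ℚ_[p]), 1, 1]

def dMatInv (p : ℕ) [Fact p.Prime] : Matrix (Fin 4) (Fin 4) ℚ_[p] :=
  diagonal ![(p : ℚ_[p])⁻¹, (p : ℚ_[p])⁻¹, 1, 1]

def uMat (x y z : ℚ_[p]) : Matrix (Fin 4) (Fin 4) ℚ_[p] :=
  !![1, 0, x, y; 0, 1, z, x; 0, 0, 1, 0; 0, 0, 0, 1]

def sMat (p : ℕ) [Fact p.Prime] : Matrix (Fin 4) (Fin 4) ℚ_[p] :=
  !![1, 0, 0, 0; 0, 0, 1, 0; 0, -1, 0, 0; 0, 0, 0, 1]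

def sMatInv (p : ℕ) [Fact p.Prime] : Matrix (Fin 4) (Fin 4) ℚ_[p] :=
  !![1, 0, 0, 0; 0, 0, -1, 0; 0, 1, 0, 0; 0, 0, 0, 1]

lemma dMatInv_mul_dMat : dMatInv p * dMat p = 1 := by
  have : (p : ℚ_[p]) ≠ 0 := by exact_mod_cast (Fact.out : p.Prime).ne_zero
  ext i j; fin_cases i <;> fin_cases j <;> simp [dMat, dMatInv, this]

lemma dMat_mul_dMatInv : dMat p * dMatInv p = 1 := by
  have : (p : ℚ_[p]) ≠ 0 := by exact_mod_cast (Fact.out : p.Prime).ne_zero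
  ext i j; fin_cases i <;> fin_cases j <;> simp [dMat, dMatInv, this]

lemma uMat_mul_uMat (x y z x' y' z' : ℚ_[p]) :
    uMat x y z * uMat x' y' z' = uMat (x + x') (y + y') (z + z') := by
  ext i j; fin_cases i <;> fin_cases j <;> simp [uMat, mul_apply, Fin.sum_univ_four, add_comm]

lemma uMat_neg_mul_uMat (x y z : ℚ_[p]) : uMat (-x) (-y) (-z) * uMat x y z = 1 := by
  ext i j; fin_cases i <;> fin_cases j <;> simp [uMat, mul_apply, Fin.sum_univ_four]

lemma uMat_mul_uMat_neg (x y z : ℚ_[p]) : uMat x y z * uMat (-x) (-y) (-z) = 1 := by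
  ext i j; fin_cases i <;> fin_cases j <;> simp [uMat, mul_apply, Fin.sum_univ_four]

lemma sMat_mul_sMatInv : sMat p * sMatInv p = 1 := by
  ext i j; fin_cases i <;> fin_cases j <;> simp [sMat, sMatInv, mul_apply, Fin.sum_univ_four]

lemma sMatInv_mul_sMat : sMatInv p * sMat p = 1 := by
  ext i j; fin_cases i <;> fin_cases j <;> simp [sMat, sMatInv, mul_apply, Fin.sum_univ_four]

lemma rep3_inl (x y z : Fin p) :
    rep3 p (.inl (x, y, z)) = uMat (x : ℕ) (y : ℕ) (z : ℕ) * dMat p := by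
  ext r c; fin_cases r <;> fin_cases c <;> simp [rep3, uMat, dMat]

lemma rep3_inr (x y : Fin p) :
    rep3 p (.inr (x, y)) = sMat p * uMat (x : ℕ) (y : ℕ) 0 * dMat p * sMatInv p := by
  ext r c; fin_cases r <;> fin_cases c <;>
    simp [rep3, uMat, dMat, sMat, sMatInv, mul_apply, Fin.sum_univ_four, vecMul_diagonal]

lemma uMat_neg_mul_apply_zero (x y z : ℚ_[p]) (j : Fin 4) :
    (uMat (-x) (-y) (-z) * a) 0 j = a 0 j - x * a 2 j - y * a 3 j := by
  simp [uMat, mul_apply, Fin.sum_univ_four, sub_eq_add_neg]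

lemma uMat_neg_mul_apply_one (x y z : ℚ_[p]) (j : Fin 4) :
    (uMat (-x) (-y) (-z) * a) 1 j = a 1 j - z * a 2 j - x * a 3 j := by
  simp [uMat, mul_apply, Fin.sum_univ_four, sub_eq_add_neg]

lemma dMatInv_mul_apply (i j : Fin 4) :
    (dMatInv p * M) i j = ![(p : ℚ_[p])⁻¹, (p : ℚ_[p])⁻¹, 1, 1] i * M i j := by
  simp [dMatInv, diagonal_mul]

lemma dMatInv_mul_mul_dMat_apply (i j : Fin 4) :
    (dMatInv p * M * dMat p) i j =
      ![(p : ℚ_[p])⁻¹, (p : ℚ_[p])⁻¹, 1, 1] i * M i j *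
        ![(p : ℚ_[p]), (p : ℚ_[p]), 1, 1] j := by
  simp [dMatInv, dMat, diagonal_mul, mul_diagonal]

lemma isSimilitude_dMat : IsSimilitude (dMat p) p := by
  unfold IsSimilitude
  ext i j; fin_cases i <;> fin_cases j <;> simp [dMat, Jmat, mul_apply, Fin.sum_univ_four]

lemma isSimilitude_dMatInv : IsSimilitude (dMatInv p) (p : ℚ_[p])⁻¹ := by
  unfold IsSimilitude
  ext i j; fin_cases i <;> fin_cases j <;> simp [dMatInv, Jmat, mul_apply, Fin.sum_univ_four]

lemma isSimilitude_uMat (x y z : ℚ_[p]) : IsSimilitude (uMat x y z) 1 := by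
  unfold IsSimilitude
  ext i j; fin_cases i <;> fin_cases j <;> simp [uMat, Jmat, mul_apply, Fin.sum_univ_four]

lemma isSimilitude_sMat : IsSimilitude (sMat p) 1 := by
  unfold IsSimilitude
  ext i j; fin_cases i <;> fin_cases j <;> simp [sMat, Jmat, mul_apply, Fin.sum_univ_four]

lemma isSimilitude_sMatInv : IsSimilitude (sMatInv p) 1 := by
  unfold IsSimilitude
  ext i j; fin_cases i <;> fin_cases j <;> simp [sMatInv, Jmat, mul_apply, Fin.sum_univ_four]

lemma mem_Kmn1_of_isSimilitude_one {g : Matrix (Fin 4) (Fin 4) ℚ_[p]}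
    (hg1 : ∀ i j, ‖g i j‖ ≤ 1) (hdet : g.det = 1) (hg : IsSimilitude g 1)
    (hL : ∀ ij ∈ lowerLeft, g ij.1 ij.2 = 0) :
    g ∈ Kmn1 p m n :=
  mem_Kmn1_iff.mpr ⟨hg1, by simp [hdet], ⟨1, by simp, by simp, hg⟩,
    fun ij hij => by simp [hL ij hij]⟩

lemma uMat_mem {x y z : ℚ_[p]} (hx : ‖x‖ ≤ 1) (hy : ‖y‖ ≤ 1) (hz : ‖z‖ ≤ 1) :
    uMat x y z ∈ Kmn1 p m n := by
  refine mem_Kmn1_of_isSimilitude_one (fun i j => ?_) ?_ (isSimilitude_uMat x y z) ?_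
  · fin_cases i <;> fin_cases j <;> simp [uMat, *]
  · simp [uMat, det_succ_row_zero, Fin.sum_univ_succ]
  · simp [lowerLeft, uMat]

lemma sMat_mem : sMat p ∈ Kmn1 p m n := by
  refine mem_Kmn1_of_isSimilitude_one (fun i j => ?_) ?_ isSimilitude_sMat ?_
  · fin_cases i <;> fin_cases j <;> simp [sMat]
  · simp [sMat, det_succ_row_zero, Fin.sum_univ_succ]
  · simp [lowerLeft, sMat]

lemma sMatInv_mem : sMatInv p ∈ Kmn1 p m n := by
  refine mem_Kmn1_of_isSimilitude_one (fun i j => ?_) ?_ isSimilitude_sMatInv ?_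
  · fin_cases i <;> fin_cases j <;> simp [sMatInv]
  · simp [sMatInv, det_succ_row_zero, Fin.sum_univ_succ]
  · simp [lowerLeft, sMatInv]

def upperRight : Finset (Fin 4 × Fin 4) := {(0, 2), (0, 3), (1, 2), (1, 3)}

lemma norm_dMatInv_mul_mul_dMat_apply_le {i j : Fin 4} (h : (i, j) ∉ upperRight) :
    ‖(dMatInv p * M * dMat p) i j‖ ≤ ‖M i j‖ := by
  have hp : (1 : ℝ) ≤ p := mod_cast (Fact.out : p.Prime).one_le
  rw [dMatInv_mul_mul_dMat_apply]
  fin_cases i <;> fin_cases j <;> simp [upperRight, Padic.norm_p] at h ⊢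
  all_goals first
    | exact mul_le_of_le_one_right (norm_nonneg _) (inv_le_one_of_one_le₀ hp)
    | exact le_of_eq (by field_simp)

lemma dMatInv_mul_mul_dMat_apply_of_mem_upperRight {i j : Fin 4} (h : (i, j) ∈ upperRight) :
    (dMatInv p * M * dMat p) i j = (p : ℚ_[p])⁻¹ * M i j := by
  rw [dMatInv_mul_mul_dMat_apply]
  fin_cases i <;> fin_cases j <;> simp [upperRight] at h ⊢

lemma Kmn1.dMatInv_mul_mul_dMat_mem (hM : M ∈ Kmn1 p m n)
    (hU : ∀ ij ∈ upperRight, ‖M ij.1 ij.2‖ ≤ (p : ℝ)⁻¹) :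
    dMatInv p * M * dMat p ∈ Kmn1 p m n := by
  obtain ⟨h1, hdet, ⟨μ, hμ1, hμm, hμ⟩, hL⟩ := mem_Kmn1_iff.mp hM
  refine mem_Kmn1_iff.mpr ⟨fun i j => ?_, ?_, ⟨μ, hμ1, hμm, ?_⟩, fun ij hij => ?_⟩
  · by_cases h : (i, j) ∈ upperRight
    · rw [dMatInv_mul_mul_dMat_apply_of_mem_upperRight h]
      exact Padic.norm_inv_p_mul_le_one_iff.mpr (hU _ h)
    · exact (norm_dMatInv_mul_mul_dMat_apply_le h).trans (h1 i j)
  · rwa [det_mul, det_mul, mul_right_comm, ← det_mul, dMatInv_mul_dMat, det_one, one_mul]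
  · have hp : (p : ℚ_[p]) ≠ 0 := by exact_mod_cast (Fact.out : p.Prime).ne_zero
    convert (isSimilitude_dMatInv.mul hμ).mul isSimilitude_dMat using 1
    field_simp
  · have : ij ∉ upperRight := by revert ij; decide
    exact (norm_dMatInv_mul_mul_dMat_apply_le this).trans (hL ij hij)

lemma exists_mul_dMat_eq_uMat_dMat_mul (ha : a ∈ Kmn1 p m n) {x y z : ℚ_[p]}
    (hx : ‖x‖ ≤ 1) (hy : ‖y‖ ≤ 1) (hz : ‖z‖ ≤ 1)
    (h02 : ‖a 0 2 - x * a 2 2 - y * a 3 2‖ ≤ (p : ℝ)⁻¹)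
    (h03 : ‖a 0 3 - x * a 2 3 - y * a 3 3‖ ≤ (p : ℝ)⁻¹)
    (h12 : ‖a 1 2 - z * a 2 2 - x * a 3 2‖ ≤ (p : ℝ)⁻¹)
    (h13 : ‖a 1 3 - z * a 2 3 - x * a 3 3‖ ≤ (p : ℝ)⁻¹) :
    ∃ k ∈ Kmn1 p m n, a * dMat p = uMat x y z * dMat p * k := by
  have hM : uMat (-x) (-y) (-z) * a ∈ Kmn1 p m n :=
    Kmn1.mul_mem (uMat_mem (by rwa [norm_neg]) (by rwa [norm_neg]) (by rwa [norm_neg])) ha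
  refine ⟨_, Kmn1.dMatInv_mul_mul_dMat_mem hM ?_, ?_⟩
  · simpa [upperRight, uMat_neg_mul_apply_zero, uMat_neg_mul_apply_one] using
      ⟨h02, h03, h12, h13⟩
  · simp only [Matrix.mul_assoc]
    rw [← Matrix.mul_assoc (dMat p), dMat_mul_dMatInv, Matrix.one_mul, ← Matrix.mul_assoc,
      uMat_mul_uMat_neg, Matrix.one_mul]

lemma exists_digits_of_norm_apply_two_two_eq_one (hn : 1 ≤ n) (ha : a ∈ Kmn1 p m n)
    (h22 : ‖a 2 2‖ = 1) :
    ∃ x y z : Fin p,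
      ‖a 0 2 - (x : ℕ) * a 2 2 - (y : ℕ) * a 3 2‖ ≤ (p : ℝ)⁻¹ ∧
      ‖a 0 3 - (x : ℕ) * a 2 3 - (y : ℕ) * a 3 3‖ ≤ (p : ℝ)⁻¹ ∧
      ‖a 1 2 - (z : ℕ) * a 2 2 - (x : ℕ) * a 3 2‖ ≤ (p : ℝ)⁻¹ ∧
      ‖a 1 3 - (z : ℕ) * a 2 3 - (x : ℕ) * a 3 3‖ ≤ (p : ℝ)⁻¹ := by
  have h1 := Kmn1.norm_apply_le_one ha
  have h32 : ‖a 3 2‖ ≤ (p : ℝ)⁻¹ := Kmn1.norm_apply_le_inv hn ha (ij := (3, 2)) (by decide)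
  obtain ⟨-, -, ⟨μ, -, -, hμ⟩, -⟩ := mem_Kmn1_iff.mp ha
  obtain ⟨x, hx⟩ := Padic.exists_digit_norm_sub_mul_le (h1 0 2) h22
  obtain ⟨z, hz⟩ := Padic.exists_digit_norm_sub_mul_le (h1 1 2) h22
  obtain ⟨y, hy⟩ := Padic.exists_digit_norm_sub_mul_le
    (norm_sub_le_of_le (h1 0 3)
      (norm_mul_le_of_norm_le_one_left (Padic.norm_natCast_le_one x) (h1 2 3)))
    (Kmn1.norm_apply_three_three hn ha)
  refine ⟨x, y, z, norm_sub_le_of_le hx (norm_mul_le_of_norm_le_one_left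
    (Padic.norm_natCast_le_one _) h32), hy, norm_sub_le_of_le hz (norm_mul_le_of_norm_le_one_left
    (Padic.norm_natCast_le_one _) h32), ?_⟩
  have hmul : a 2 2 * (a 1 3 - (z : ℕ) * a 2 3 - (x : ℕ) * a 3 3) =
      a 3 3 * (a 0 2 - (x : ℕ) * a 2 2) + a 2 3 * (a 1 2 - (z : ℕ) * a 2 2) -
        a 3 2 * a 0 3 := by
    linear_combination -hμ.apply_two_three
  rw [← one_mul ‖_‖, ← h22, ← norm_mul, hmul]
  exact norm_sub_le_of_le (norm_add_le_of_le (norm_mul_le_of_norm_le_one_left (h1 3 3) hx)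
    (norm_mul_le_of_norm_le_one_left (h1 2 3) hz)) (norm_mul_le_of_norm_le_one_right h32 (h1 0 3))

lemma exists_digits_of_norm_apply_one_two_le (hn : 1 ≤ n) (hb : b ∈ Kmn1 p m n)
    (h12 : ‖b 1 2‖ ≤ (p : ℝ)⁻¹) :
    ∃ x y : Fin p,
      ‖b 0 2 - (x : ℕ) * b 2 2 - (y : ℕ) * b 3 2‖ ≤ (p : ℝ)⁻¹ ∧
      ‖b 0 3 - (x : ℕ) * b 2 3 - (y : ℕ) * b 3 3‖ ≤ (p : ℝ)⁻¹ ∧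
      ‖b 1 2 - (x : ℕ) * b 3 2‖ ≤ (p : ℝ)⁻¹ ∧
      ‖b 1 3 - (x : ℕ) * b 3 3‖ ≤ (p : ℝ)⁻¹ := by
  have h1 := Kmn1.norm_apply_le_one hb
  have h32 : ‖b 3 2‖ ≤ (p : ℝ)⁻¹ := Kmn1.norm_apply_le_inv hn hb (ij := (3, 2)) (by decide)
  have h33 := Kmn1.norm_apply_three_three hn hb
  obtain ⟨-, -, ⟨μ, -, -, hμ⟩, -⟩ := mem_Kmn1_iff.mp hb
  obtain ⟨x, hx⟩ := Padic.exists_digit_norm_sub_mul_le (h1 1 3) h33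
  obtain ⟨y, hy⟩ := Padic.exists_digit_norm_sub_mul_le (norm_sub_le_of_le (h1 0 3)
    (norm_mul_le_of_norm_le_one_left (Padic.norm_natCast_le_one x) (h1 2 3))) h33
  refine ⟨x, y, ?_, hy, norm_sub_le_of_le h12 (norm_mul_le_of_norm_le_one_left
    (Padic.norm_natCast_le_one _) h32), hx⟩
  have hmul : b 3 3 * (b 0 2 - (x : ℕ) * b 2 2 - (y : ℕ) * b 3 2) =
      b 2 2 * (b 1 3 - (x : ℕ) * b 3 3) - b 1 2 * b 2 3 +
        b 3 2 * (b 0 3 - (y : ℕ) * b 3 3) := by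
    linear_combination hμ.apply_two_three
  rw [← one_mul ‖_‖, ← h33, ← norm_mul, hmul]
  refine norm_add_le_of_le (norm_sub_le_of_le (norm_mul_le_of_norm_le_one_left (h1 2 2) hx)
    (norm_mul_le_of_norm_le_one_right h12 (h1 2 3))) (norm_mul_le_of_norm_le_one_right h32 ?_)
  exact norm_sub_le_of_le (h1 0 3)
    (norm_mul_le_of_norm_le_one_left (Padic.norm_natCast_le_one _) (h1 3 3))

lemma exists_mul_dMat_eq_rep3_mul (hn : 1 ≤ n) (ha : a ∈ Kmn1 p m n) :
    ∃ i, ∃ k ∈ Kmn1 p m n, a * dMat p = rep3 p i * k := by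
  have hdigit := Padic.norm_natCast_le_one (p := p)
  by_cases h22 : ‖a 2 2‖ = 1
  · obtain ⟨x, y, z, h02, h03, h12, h13⟩ :=
      exists_digits_of_norm_apply_two_two_eq_one hn ha h22
    obtain ⟨k, hk, hak⟩ := exists_mul_dMat_eq_uMat_dMat_mul ha (hdigit x) (hdigit y) (hdigit z)
      h02 h03 h12 h13
    exact ⟨.inl (x, y, z), k, hk, by rw [rep3_inl, hak]⟩
  · have hb : sMatInv p * a ∈ Kmn1 p m n := Kmn1.mul_mem sMatInv_mem ha
    have hb12 : ‖(sMatInv p * a) 1 2‖ ≤ (p : ℝ)⁻¹ := by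
      simpa [sMatInv, mul_apply, Fin.sum_univ_four] using Padic.norm_le_inv_of_norm_lt_one
        (lt_of_le_of_ne (Kmn1.norm_apply_le_one ha 2 2) h22)
    obtain ⟨x, y, h02, h03, h12, h13⟩ := exists_digits_of_norm_apply_one_two_le hn hb hb12
    obtain ⟨k, hk, hbk⟩ := exists_mul_dMat_eq_uMat_dMat_mul hb (hdigit x) (hdigit y) (z := 0)
      (by simp) h02 h03 (by simpa using h12) (by simpa using h13)
    refine ⟨.inr (x, y), sMat p * k, Kmn1.mul_mem sMat_mem hk, ?_⟩
    calc a * dMat p = sMat p * (sMatInv p * a * dMat p) := by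
          rw [← Matrix.mul_assoc, ← Matrix.mul_assoc, sMat_mul_sMatInv, Matrix.one_mul]
      _ = rep3 p (.inr (x, y)) * (sMat p * k) := by
          rw [hbk, rep3_inr]
          simp only [Matrix.mul_assoc]
          rw [← Matrix.mul_assoc (sMatInv p), sMatInv_mul_sMat, Matrix.one_mul]

lemma rep3_mul_mem_Kmn1_mul_dMat_mul (i) (hk : k ∈ Kmn1 p m n) :
    rep3 p i * k ∈ Kmn1 p m n * {dMat p} * Kmn1 p m n := by
  have hdigit := Padic.norm_natCast_le_one (p := p)
  rcases i with ⟨x, y, z⟩ | ⟨x, y⟩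
  · rw [rep3_inl]
    exact Set.mul_mem_mul (Set.mul_mem_mul (uMat_mem (hdigit _) (hdigit _) (hdigit _)) rfl) hk
  · rw [rep3_inr, Matrix.mul_assoc _ (sMatInv p)]
    exact Set.mul_mem_mul (Set.mul_mem_mul (Kmn1.mul_mem sMat_mem
      (uMat_mem (hdigit _) (hdigit _) (by simp))) rfl) (Kmn1.mul_mem sMatInv_mem hk)

lemma norm_sub_le_of_uMat_dMat_mul_eq {x y z x' y' z' : ℚ_[p]} (hk : ∀ i j, ‖k i j‖ ≤ 1)
    (h : uMat x y z * dMat p * k = uMat x' y' z' * dMat p) :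
    ‖x' - x‖ ≤ (p : ℝ)⁻¹ ∧ ‖y' - y‖ ≤ (p : ℝ)⁻¹ ∧
      ‖z' - z‖ ≤ (p : ℝ)⁻¹ := by
  have hk' : k = dMatInv p * uMat (x' - x) (y' - y) (z' - z) * dMat p := by
    calc k = dMatInv p * (uMat (-x) (-y) (-z) * (uMat x y z * dMat p * k)) := by
          simp only [Matrix.mul_assoc]
          rw [← Matrix.mul_assoc (uMat _ _ _), uMat_neg_mul_uMat, Matrix.one_mul,
            ← Matrix.mul_assoc, dMatInv_mul_dMat, Matrix.one_mul]
      _ = dMatInv p * uMat (x' - x) (y' - y) (z' - z) * dMat p := by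
          rw [h, ← Matrix.mul_assoc (uMat _ _ _), uMat_mul_uMat, ← Matrix.mul_assoc]
          simp only [neg_add_eq_sub]
  have hentry (i j : Fin 4) (hij : (i, j) ∈ upperRight) :
      ‖uMat (x' - x) (y' - y) (z' - z) i j‖ ≤ (p : ℝ)⁻¹ := by
    have := hk i j
    rw [hk', dMatInv_mul_mul_dMat_apply_of_mem_upperRight hij] at this
    exact Padic.norm_inv_p_mul_le_one_iff.mp this
  exact ⟨by simpa [uMat] using hentry 0 2 (by decide),
    by simpa [uMat] using hentry 0 3 (by decide), by simpa [uMat] using hentry 1 2 (by decide)⟩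

lemma rep3_inl_mul_ne_rep3_inr (hk : ∀ i j, ‖k i j‖ ≤ 1) (x y z x' y' : Fin p) :
    rep3 p (.inl (x, y, z)) * k ≠ rep3 p (.inr (x', y')) := by
  intro h
  rw [rep3_inl] at h
  have hk' :
      k = dMatInv p * (uMat (-(x : ℕ)) (-(y : ℕ)) (-(z : ℕ)) * rep3 p (.inr (x', y'))) := by
    rw [← h]
    simp only [Matrix.mul_assoc]
    rw [← Matrix.mul_assoc (uMat _ _ _), uMat_neg_mul_uMat, Matrix.one_mul,
      ← Matrix.mul_assoc, dMatInv_mul_dMat, Matrix.one_mul]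
  have h11 := hk 1 1
  rw [hk', dMatInv_mul_apply, uMat_neg_mul_apply_one] at h11
  simp [rep3, Padic.norm_p, (Fact.out : p.Prime).one_lt.not_ge] at h11

lemma sMatInv_mul_rep3_inr_mul_sMat (x y : Fin p) :
    sMatInv p * rep3 p (.inr (x, y)) * sMat p = uMat (x : ℕ) (y : ℕ) 0 * dMat p := by
  rw [rep3_inr]
  simp only [Matrix.mul_assoc]
  rw [sMatInv_mul_sMat, Matrix.mul_one, ← Matrix.mul_assoc, sMatInv_mul_sMat, Matrix.one_mul]

lemma injective_rep3_mul : Function.Injective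
    fun i => ({rep3 p i} : Set (Matrix (Fin 4) (Fin 4) ℚ_[p])) * Kmn1 p m n := by
  have hmem {i j} (h : ({rep3 p i} : Set (Matrix (Fin 4) (Fin 4) ℚ_[p])) * Kmn1 p m n =
      {rep3 p j} * Kmn1 p m n) : ∃ k ∈ Kmn1 p m n, rep3 p j * k = rep3 p i := by
    obtain ⟨_, rfl, k, hk, hjk⟩ : rep3 p i ∈ ({rep3 p j} : Set _) * Kmn1 p m n :=
      h ▸ ⟨_, rfl, 1, Kmn1.one_mem, Matrix.mul_one _⟩
    exact ⟨k, hk, hjk⟩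
  intro i j hij
  obtain ⟨k, hk, hjk⟩ := hmem hij
  obtain ⟨k', hk', hik⟩ := hmem hij.symm
  have hfin := @Padic.fin_eq_of_norm_natCast_sub_le p _
  rcases i with ⟨x, y, z⟩ | ⟨x, y⟩ <;> rcases j with ⟨x', y', z'⟩ | ⟨x', y'⟩
  · rw [rep3_inl, rep3_inl] at hjk
    obtain ⟨hx, hy, hz⟩ := norm_sub_le_of_uMat_dMat_mul_eq (Kmn1.norm_apply_le_one hk) hjk
    rw [hfin hx, hfin hy, hfin hz]
  · exact absurd hik (rep3_inl_mul_ne_rep3_inr (Kmn1.norm_apply_le_one hk') _ _ _ _ _)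
  · exact absurd hjk (rep3_inl_mul_ne_rep3_inr (Kmn1.norm_apply_le_one hk) _ _ _ _ _)
  · have hconj : uMat (x' : ℕ) (y' : ℕ) 0 * dMat p * (sMatInv p * k * sMat p) =
        uMat (x : ℕ) (y : ℕ) 0 * dMat p := by
      rw [← sMatInv_mul_rep3_inr_mul_sMat, ← sMatInv_mul_rep3_inr_mul_sMat, ← hjk]
      simp only [Matrix.mul_assoc]
      rw [← Matrix.mul_assoc (sMat p) (sMatInv p), sMat_mul_sMatInv, Matrix.one_mul]
    obtain ⟨hx, hy, -⟩ := norm_sub_le_of_uMat_dMat_mul_eq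
      (Kmn1.norm_apply_le_one (Kmn1.mul_mem (Kmn1.mul_mem sMatInv_mem hk) sMat_mem)) hconj
    rw [hfin hx, hfin hy]

end GSp4

open GSp4

/-- Double coset decomposition of `K^{(1)}_{m,n} · diag(ℓ,ℓ,1,1) · K^{(1)}_{m,n}` into
`ℓ³ + ℓ²` pairwise distinct left cosets. -/
theorem stmt3 (p : ℕ) [Fact p.Prime] (m n : ℕ) (hn : 1 ≤ n) :
    (Kmn1 p m n * {Matrix.diagonal ![(p : ℚ_[p]), (p : ℚ_[p]), 1, 1]} * Kmn1 p m n =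
      ⋃ i : (Fin p × Fin p × Fin p) ⊕ (Fin p × Fin p),
        ({rep3 p i} : Set (Matrix (Fin 4) (Fin 4) ℚ_[p])) * Kmn1 p m n) ∧
    Function.Injective
      (fun i : (Fin p × Fin p × Fin p) ⊕ (Fin p × Fin p) =>
        ({rep3 p i} : Set (Matrix (Fin 4) (Fin 4) ℚ_[p])) * Kmn1 p m n) := by
  refine ⟨Set.Subset.antisymm ?_ ?_, injective_rep3_mul⟩
  · rintro _ ⟨_, ⟨a, ha, _, rfl, rfl⟩, b, hb, rfl⟩
    obtain ⟨i, k, hk, hak⟩ := exists_mul_dMat_eq_rep3_mul hn ha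
    exact Set.mem_iUnion.mpr ⟨i, _, rfl, k * b, Kmn1.mul_mem hk hb,
      (Matrix.mul_assoc _ _ _).symm.trans (congrArg (· * b) hak.symm)⟩
  · refine Set.iUnion_subset fun i => ?_
    rintro _ ⟨_, rfl, k, hk, rfl⟩
    exact rep3_mul_mem_Kmn1_mul_dMat_mul i hk
end
end

section
/- Let ℓ be a prime and m ≥ 0, n ≥ 1 integers. In GSp₄(ℚ_ℓ) one has the double coset decomposition K^{(1)}_{m,n} · diag(ℓ⁴, ℓ², ℓ², 1) · K^{(1)}_{m,n} = ⋃ M(x,y,z) · K^{(1)}_{m,n}, where M(x,y,z) has rows (ℓ⁴, ℓ²x, ℓ²y, z), (0, ℓ², 0, y), (0, 0, ℓ², −x), (0, 0, 0, 1) and the union is over 0 ≤ x, y < ℓ² and 0 ≤ z < ℓ⁴; the ℓ⁸ listed left cosets are pairwise distinct. -/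
open Pointwise

noncomputable section

/-- The coset representatives `M(x,y,z)` for `0 ≤ x,y < ℓ²`, `0 ≤ z < ℓ⁴`. -/
def rep7 (p : ℕ) [Fact p.Prime] :
    Fin (p ^ 2) × Fin (p ^ 2) × Fin (p ^ 4) → Matrix (Fin 4) (Fin 4) ℚ_[p] :=
  fun i => !![(p : ℚ_[p]) ^ 4, (p : ℚ_[p]) ^ 2 * ((i.1 : ℕ) : ℚ_[p]),
                (p : ℚ_[p]) ^ 2 * ((i.2.1 : ℕ) : ℚ_[p]), ((i.2.2 : ℕ) : ℚ_[p]);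
              0, (p : ℚ_[p]) ^ 2, 0, ((i.2.1 : ℕ) : ℚ_[p]);
              0, 0, (p : ℚ_[p]) ^ 2, -((i.1 : ℕ) : ℚ_[p]);
              0, 0, 0, 1]

/-! Write `D = diag(ℓ⁴, ℓ², ℓ², 1)` and `M(x, y, z) = U(x, y, z) · D` with `U(x, y, z)` unipotent
and in `K = K^{(1)}_{m,n}`. The `(i, j)` entry of `D⁻¹ g D` is `ℓ^(eᵢ - eⱼ) gᵢⱼ` with
`e = (4, 2, 2, 0)`; the congruence positions of `K` are exactly those with `eᵢ < eⱼ`, where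
conjugation only shrinks entries. So `D⁻¹ g D ∈ K` as soon as `g ∈ K` and `gᵢⱼ ≡ 0 mod ℓ^(eᵢ - eⱼ)`
whenever `eⱼ < eᵢ`.

For `k ∈ K`, the condition `n ≥ 1` makes the lower right entry of `k` a unit, so `x, y, z` can be
chosen such that the entries `(1, 4), (2, 4), (3, 4)` of `V = U(x, y, z)⁻¹ k` are divisible by
`ℓ⁴, ℓ², ℓ²`. The symplectic relations between the columns of `V` then make its entries `(1, 2)`
and `(1, 3)` divisible by `ℓ²`. Hence `k D = M(x, y, z) · D⁻¹ V D` with `D⁻¹ V D ∈ K`.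
Conversely `M(x', y', z')⁻¹ M(x, y, z) = D⁻¹ U(x - x', y - y', z - z' - x'y + y'x) D` is
integral only if `x ≡ x'`, `y ≡ y' mod ℓ²` and then `z ≡ z' mod ℓ⁴`.
-/

open Matrix IsUltrametricDist

namespace IsUltrametricDist

variable {S : Type*} [SeminormedAddGroup S] [IsUltrametricDist S] {a b : S} {C : ℝ}

theorem norm_add_le_of_both_le (ha : ‖a‖ ≤ C) (hb : ‖b‖ ≤ C) : ‖a + b‖ ≤ C :=
  (norm_add_le_max a b).trans (max_le ha hb)

theorem norm_sub_le_of_both_le (ha : ‖a‖ ≤ C) (hb : ‖b‖ ≤ C) : ‖a - b‖ ≤ C := by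
  simpa only [sub_eq_add_neg] using norm_add_le_of_both_le ha (by rwa [norm_neg])

theorem norm_mul_apply_le {R l m n : Type*} [SeminormedRing R] [IsUltrametricDist R] [Fintype m]
    {A : Matrix l m R} {B : Matrix m n R} {i : l} {j : n} (hC : 0 ≤ C)
    (h : ∀ k, ‖A i k‖ * ‖B k j‖ ≤ C) : ‖(A * B) i j‖ ≤ C :=
  norm_sum_le_of_forall_le_of_nonneg hC fun k _ => (norm_mul_le _ _).trans (h k)

end IsUltrametricDist

def IsSimilitude {R ι : Type*} [CommRing R] [Fintype ι] (J : Matrix ι ι R) (c : R)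
    (A : Matrix ι ι R) : Prop :=
  Aᵀ * J * A = c • J

theorem IsSimilitude.mul {R ι : Type*} [CommRing R] [Fintype ι] {J A B : Matrix ι ι R} {a b : R}
    (hA : IsSimilitude J a A) (hB : IsSimilitude J b B) : IsSimilitude J (a * b) (A * B) := by
  unfold IsSimilitude at *
  calc (A * B)ᵀ * J * (A * B) = Bᵀ * (Aᵀ * J * A) * B := by
        simp only [transpose_mul, Matrix.mul_assoc]
    _ = (a * b) • J := by rw [hA, Matrix.mul_smul, Matrix.smul_mul, hB, smul_smul]

section Padic

variable {p : ℕ} [Fact p.Prime]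

theorem one_lt_prime_cast : (1 : ℝ) < p := Nat.one_lt_cast.mpr (Fact.out : p.Prime).one_lt

theorem prime_cast_pos : (0 : ℝ) < p := Nat.cast_pos.mpr (Fact.out : p.Prime).pos

theorem zpow_prime_cast_pos (k : ℤ) : (0 : ℝ) < (p : ℝ) ^ k := zpow_pos prime_cast_pos k

theorem prime_cast_ne_zero : (p : ℚ_[p]) ≠ 0 := Nat.cast_ne_zero.mpr (Fact.out : p.Prime).ne_zero

theorem exists_nat_lt_norm_sub_le {t : ℚ_[p]} (ht : ‖t‖ ≤ 1) (c : ℕ) :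
    ∃ a < p ^ c, ‖t - a‖ ≤ (p : ℝ) ^ (-(c : ℤ)) := by
  let x : ℤ_[p] := ⟨t, ht⟩
  refine ⟨x.appr c, x.appr_lt c, ?_⟩
  have h := (PadicInt.norm_le_pow_iff_mem_span_pow _ c).mpr (PadicInt.appr_spec c x)
  rwa [PadicInt.norm_def, PadicInt.coe_sub, PadicInt.coe_natCast] at h

theorem exists_nat_lt_norm_sub_mul_le {t u : ℚ_[p]} (ht : ‖t‖ ≤ 1) (hu : ‖u‖ = 1) (c : ℕ) :
    ∃ a < p ^ c, ‖t - a * u‖ ≤ (p : ℝ) ^ (-(c : ℤ)) := by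
  have hu0 : u ≠ 0 := norm_ne_zero_iff.mp (by rw [hu]; exact one_ne_zero)
  obtain ⟨a, ha, hta⟩ := exists_nat_lt_norm_sub_le (t := t / u) (by rwa [norm_div, hu, div_one]) c
  refine ⟨a, ha, ?_⟩
  rwa [show t - a * u = (t / u - a) * u by field_simp, norm_mul, hu, mul_one]

theorem eq_of_norm_natCast_sub_le {a b c : ℕ} (ha : a < p ^ c) (hb : b < p ^ c)
    (h : ‖(a : ℚ_[p]) - b‖ ≤ (p : ℝ) ^ (-(c : ℤ))) : a = b := by
  have hdvd : (p : ℤ) ^ c ∣ (a : ℤ) - b :=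
    (Padic.norm_int_le_pow_iff_dvd _ c).mp (by push_cast; exact h)
  have hpc := Int.natCast_pow p c
  have habs : |(a : ℤ) - b| < (p : ℤ) ^ c := abs_sub_lt_iff.mpr (by constructor <;> omega)
  have := Int.eq_zero_of_abs_lt_dvd hdvd habs
  omega

end Padic

section Kmn1

variable {p : ℕ} [Fact p.Prime] {m n : ℕ}

def diagExp : Fin 4 → ℤ := ![4, 2, 2, 0]

theorem mem_Kmn1_iff {g : Matrix (Fin 4) (Fin 4) ℚ_[p]} :
    g ∈ Kmn1 p m n ↔ (∀ i j, ‖g i j‖ ≤ 1) ∧ ‖g.det‖ = 1 ∧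
      (∃ μ : ℚ_[p], ‖μ‖ = 1 ∧ ‖μ - 1‖ ≤ (p : ℝ) ^ (-(m : ℤ)) ∧ IsSimilitude (Jmat p) μ g) ∧
      ∀ i j, diagExp i < diagExp j → ‖g i j‖ ≤ (p : ℝ) ^ (-(n : ℤ)) := by
  refine and_congr_right fun _ => and_congr_right fun _ => and_congr_right fun _ => ⟨?_, ?_⟩
  · rintro ⟨h10, h20, h30, h31, h32⟩ i j hij
    fin_cases i <;> fin_cases j <;> first | assumption | simp [diagExp] at hij
  · intro h
    exact ⟨h 1 0 (by simp [diagExp]), h 2 0 (by simp [diagExp]), h 3 0 (by simp [diagExp]),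
      h 3 1 (by simp [diagExp]), h 3 2 (by simp [diagExp])⟩

theorem Kmn1.one_mem : (1 : Matrix (Fin 4) (Fin 4) ℚ_[p]) ∈ Kmn1 p m n := by
  refine mem_Kmn1_iff.mpr ⟨fun i j => ?_, by simp, ⟨1, by simp, by simp,
    by simp [IsSimilitude]⟩, fun i j hij => ?_⟩
  · by_cases hij : i = j <;> simp [one_apply, hij]
  · rw [one_apply_ne (by rintro rfl; exact lt_irrefl _ hij), norm_zero]
    exact (zpow_prime_cast_pos _).le

theorem Kmn1.mul_mem {g h : Matrix (Fin 4) (Fin 4) ℚ_[p]} (hg : g ∈ Kmn1 p m n)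
    (hh : h ∈ Kmn1 p m n) : g * h ∈ Kmn1 p m n := by
  obtain ⟨gint, gdet, ⟨μ, hμ, hμm, hgJ⟩, gcong⟩ := mem_Kmn1_iff.mp hg
  obtain ⟨hint, hdet, ⟨ν, hν, hνm, hhJ⟩, hcong⟩ := mem_Kmn1_iff.mp hh
  have hpn : (0 : ℝ) ≤ (p : ℝ) ^ (-(n : ℤ)) := (zpow_prime_cast_pos _).le
  refine mem_Kmn1_iff.mpr ⟨fun i j => norm_mul_apply_le zero_le_one fun k =>
      mul_le_one₀ (gint i k) (norm_nonneg _) (hint k j),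
    by rw [det_mul, norm_mul, gdet, hdet, one_mul],
    ⟨μ * ν, by rw [norm_mul, hμ, hν, one_mul], ?_, hgJ.mul hhJ⟩, fun i j hij => ?_⟩
  · rw [show μ * ν - 1 = μ * (ν - 1) + (μ - 1) by ring]
    exact norm_add_le_of_both_le (by rwa [norm_mul, hμ, one_mul]) hμm
  · -- each summand `g i k * h k j` has a factor in a congruence position
    refine norm_mul_apply_le hpn fun k => ?_
    rcases lt_or_ge (diagExp i) (diagExp k) with hik | hki
    · exact (mul_le_of_le_one_right (norm_nonneg _) (hint k j)).trans (gcong i k hik)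
    · exact (mul_le_of_le_one_left (norm_nonneg _) (gint i k)).trans (hcong k j (hki.trans_lt hij))

end Kmn1

section PowDiag

variable (p : ℕ) [Fact p.Prime] {ι : Type*} [DecidableEq ι]

def powDiag (a : ι → ℤ) : Matrix ι ι ℚ_[p] := diagonal fun i => (p : ℚ_[p]) ^ a i

variable {p}

theorem powDiag_mul_powDiag [Fintype ι] (a b : ι → ℤ) :
    powDiag p a * powDiag p b = powDiag p (a + b) := by
  simp only [powDiag, diagonal_mul_diagonal, Pi.add_apply, zpow_add₀ prime_cast_ne_zero]

theorem powDiag_neg_mul_powDiag [Fintype ι] (a : ι → ℤ) : powDiag p (-a) * powDiag p a = 1 := by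
  rw [powDiag_mul_powDiag, neg_add_cancel]
  simp [powDiag]

theorem powDiag_mul_powDiag_neg [Fintype ι] (a : ι → ℤ) : powDiag p a * powDiag p (-a) = 1 := by
  rw [powDiag_mul_powDiag, add_neg_cancel]
  simp [powDiag]

theorem norm_powDiag_conj_apply [Fintype ι] (a : ι → ℤ) (V : Matrix ι ι ℚ_[p]) (i j : ι) :
    ‖(powDiag p (-a) * V * powDiag p a) i j‖ = (p : ℝ) ^ (a i - a j) * ‖V i j‖ := by
  rw [powDiag, powDiag, mul_diagonal, diagonal_mul, norm_mul, norm_mul, Padic.norm_p_zpow,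
    Padic.norm_p_zpow, Pi.neg_apply, neg_neg, mul_right_comm,
    ← zpow_add₀ prime_cast_pos.ne', ← sub_eq_add_neg]

theorem det_powDiag_conj [Fintype ι] (a : ι → ℤ) (V : Matrix ι ι ℚ_[p]) :
    (powDiag p (-a) * V * powDiag p a).det = V.det := by
  rw [det_mul, det_mul, mul_right_comm, ← det_mul, powDiag_neg_mul_powDiag, det_one, one_mul]

theorem isSimilitude_powDiag {a : Fin 4 → ℤ} {s : ℤ} (h₀ : a 0 + a 3 = s) (h₁ : a 1 + a 2 = s) :
    IsSimilitude (Jmat p) ((p : ℚ_[p]) ^ s) (powDiag p a) := by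
  unfold IsSimilitude
  subst h₀
  ext i j
  rw [powDiag, diagonal_transpose, mul_diagonal, diagonal_mul]
  fin_cases i <;> fin_cases j <;>
    simp [Jmat, ← zpow_add₀ prime_cast_ne_zero, h₁, add_comm (a 3), add_comm (a 2)]

theorem diagonal_eq_powDiag_diagExp :
    diagonal ![(p : ℚ_[p]) ^ 4, (p : ℚ_[p]) ^ 2, (p : ℚ_[p]) ^ 2, 1] = powDiag p diagExp := by
  rw [powDiag]
  congr 1
  ext i
  fin_cases i <;> simp [diagExp]

end PowDiag

section Conj

variable {p : ℕ} [Fact p.Prime] {m n : ℕ}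

theorem norm_apply_le_of_norm_powDiag_conj_apply_le_one {ι : Type*} [Fintype ι] [DecidableEq ι]
    {a : ι → ℤ} {V : Matrix ι ι ℚ_[p]} {i j : ι}
    (h : ‖(powDiag p (-a) * V * powDiag p a) i j‖ ≤ 1) : ‖V i j‖ ≤ (p : ℝ) ^ (a j - a i) := by
  rw [norm_powDiag_conj_apply] at h
  rw [show a j - a i = -(a i - a j) by ring, _root_.zpow_neg, ← mul_one (_ ^ _)⁻¹]
  exact (le_inv_mul_iff₀ (zpow_prime_cast_pos _)).mpr h

theorem powDiag_conj_mem_Kmn1 {V : Matrix (Fin 4) (Fin 4) ℚ_[p]} (hV : V ∈ Kmn1 p m n)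
    (hsmall : ∀ i j, diagExp j < diagExp i → ‖V i j‖ ≤ (p : ℝ) ^ (diagExp j - diagExp i)) :
    powDiag p (-diagExp) * V * powDiag p diagExp ∈ Kmn1 p m n := by
  obtain ⟨hint, hdet, ⟨μ, hμ, hμm, hVJ⟩, hcong⟩ := mem_Kmn1_iff.mp hV
  have hp : (1 : ℝ) ≤ p := one_lt_prime_cast.le
  have hJ : IsSimilitude (Jmat p) ((p : ℚ_[p]) ^ (-4 : ℤ) * μ * (p : ℚ_[p]) ^ (4 : ℤ))
      (powDiag p (-diagExp) * V * powDiag p diagExp) :=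
    ((isSimilitude_powDiag (by simp [diagExp]) (by simp [diagExp])).mul hVJ).mul
      (isSimilitude_powDiag (by simp [diagExp]) (by simp [diagExp]))
  refine mem_Kmn1_iff.mpr ⟨fun i j => ?_, by rwa [det_powDiag_conj], ⟨μ, hμ, hμm, ?_⟩,
    fun i j hij => ?_⟩
  · rw [norm_powDiag_conj_apply]
    rcases lt_or_ge (diagExp j) (diagExp i) with hji | hij
    · calc _ ≤ (p : ℝ) ^ (diagExp i - diagExp j) * (p : ℝ) ^ (diagExp j - diagExp i) :=
            mul_le_mul_of_nonneg_left (hsmall i j hji) (zpow_prime_cast_pos _).le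
        _ = 1 := by rw [← zpow_add₀ prime_cast_pos.ne']; simp
    · exact mul_le_one₀ (zpow_le_one_of_nonpos₀ hp (by omega)) (norm_nonneg _) (hint i j)
  · rwa [mul_right_comm, ← zpow_add₀ prime_cast_ne_zero, neg_add_cancel, zpow_zero,
      one_mul] at hJ
  · rw [norm_powDiag_conj_apply]
    exact (mul_le_of_le_one_left (norm_nonneg _) (zpow_le_one_of_nonpos₀ hp (by omega))).trans
      (hcong i j hij)

end Conj

section Unipotent

variable {R : Type*} [CommRing R]

def unipotent (x y z : R) : Matrix (Fin 4) (Fin 4) R :=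
  !![1, x, y, z; 0, 1, 0, y; 0, 0, 1, -x; 0, 0, 0, 1]

theorem unipotent_mul_unipotent (x y z x' y' z' : R) :
    unipotent x y z * unipotent x' y' z' =
      unipotent (x + x') (y + y') (z + z' + x * y' - y * x') := by
  ext i j
  fin_cases i <;> fin_cases j <;> simp [unipotent, mul_apply, Fin.sum_univ_four] <;> ring

theorem unipotent_zero : unipotent (0 : R) 0 0 = 1 := by
  ext i j
  fin_cases i <;> fin_cases j <;> simp [unipotent, one_apply]

theorem unipotent_neg_mul_unipotent (x y z : R) :
    unipotent (-x) (-y) (-z) * unipotent x y z = 1 := by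
  rw [unipotent_mul_unipotent, ← unipotent_zero]
  congr 1 <;> ring

theorem unipotent_mul_unipotent_neg (x y z : R) :
    unipotent x y z * unipotent (-x) (-y) (-z) = 1 := by
  rw [unipotent_mul_unipotent, ← unipotent_zero]
  congr 1 <;> ring

theorem det_unipotent (x y z : R) : (unipotent x y z).det = 1 := by
  simp [unipotent, det_succ_row_zero, Fin.sum_univ_succ]

variable (x y z : R) (k : Matrix (Fin 4) (Fin 4) R) (j : Fin 4)

theorem unipotent_mul_apply_zero :
    (unipotent x y z * k) 0 j = k 0 j + x * k 1 j + y * k 2 j + z * k 3 j := by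
  simp [unipotent, mul_apply, Fin.sum_univ_four]

theorem unipotent_mul_apply_one : (unipotent x y z * k) 1 j = k 1 j + y * k 3 j := by
  simp [unipotent, mul_apply, Fin.sum_univ_four]

theorem unipotent_mul_apply_two : (unipotent x y z * k) 2 j = k 2 j - x * k 3 j := by
  simp [unipotent, mul_apply, Fin.sum_univ_four, sub_eq_add_neg]

theorem unipotent_mul_apply_three : (unipotent x y z * k) 3 j = k 3 j := by
  simp [unipotent, mul_apply, Fin.sum_univ_four]

end Unipotent

section Symplectic

variable {p : ℕ} [Fact p.Prime] {m n : ℕ}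

theorem isSimilitude_unipotent (x y z : ℚ_[p]) : IsSimilitude (Jmat p) 1 (unipotent x y z) := by
  unfold IsSimilitude
  ext i j
  fin_cases i <;> fin_cases j <;> simp [unipotent, Jmat, mul_apply, Fin.sum_univ_four]
  all_goals ring

theorem unipotent_mem_Kmn1 {x y z : ℚ_[p]} (hx : ‖x‖ ≤ 1) (hy : ‖y‖ ≤ 1) (hz : ‖z‖ ≤ 1) :
    unipotent x y z ∈ Kmn1 p m n := by
  refine mem_Kmn1_iff.mpr ⟨fun i j => ?_, by simp [det_unipotent],
    ⟨1, by simp, by simp, isSimilitude_unipotent x y z⟩, fun i j hij => ?_⟩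
  · fin_cases i <;> fin_cases j <;> simp [unipotent, hx, hy, hz]
  · fin_cases i <;> fin_cases j <;> simp [diagExp] at hij <;> simp [unipotent]

theorem rep7_eq (i : Fin (p ^ 2) × Fin (p ^ 2) × Fin (p ^ 4)) :
    rep7 p i = unipotent ((i.1 : ℕ) : ℚ_[p]) (i.2.1 : ℕ) (i.2.2 : ℕ) * powDiag p diagExp := by
  ext a b
  fin_cases a <;> fin_cases b <;>
    simp [rep7, unipotent, powDiag, diagExp, mul_apply, Fin.sum_univ_four] <;> ring

theorem IsSimilitude.Jmat_apply {g : Matrix (Fin 4) (Fin 4) ℚ_[p]} {μ : ℚ_[p]}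
    (hg : IsSimilitude (Jmat p) μ g) (i j : Fin 4) :
    g 0 i * g 3 j + g 1 i * g 2 j - g 2 i * g 1 j - g 3 i * g 0 j = μ * Jmat p i j := by
  have h := congrFun (congrFun hg i) j
  simp only [Matrix.smul_apply, smul_eq_mul] at h
  rw [← h]
  simp [Jmat, mul_apply, Fin.sum_univ_four]
  ring

theorem norm_apply_three_three_of_mem_Kmn1 (hn : 1 ≤ n) {k : Matrix (Fin 4) (Fin 4) ℚ_[p]}
    (hk : k ∈ Kmn1 p m n) : ‖k 3 3‖ = 1 := by
  obtain ⟨hint, -, ⟨μ, hμ, -, hkJ⟩, hcong⟩ := mem_Kmn1_iff.mp hk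
  have hrel : k 0 0 * k 3 3 + (k 1 0 * k 2 3 - k 2 0 * k 1 3 - k 3 0 * k 0 3) = μ := by
    have h := hkJ.Jmat_apply 0 3
    simp only [Jmat, of_apply, cons_val', cons_val, empty_val', cons_val_fin_one, mul_one] at h
    linear_combination h
  have hpn : (p : ℝ) ^ (-(n : ℤ)) < 1 := zpow_lt_one_of_neg₀ one_lt_prime_cast (by omega)
  have hrest : ‖k 1 0 * k 2 3 - k 2 0 * k 1 3 - k 3 0 * k 0 3‖ < 1 := by
    have hsmall : ∀ i, diagExp i < diagExp 0 → ∀ j, ‖k i 0 * k j 3‖ ≤ (p : ℝ) ^ (-(n : ℤ)) :=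
      fun i hi j => by
        rw [norm_mul]
        exact (mul_le_of_le_one_right (norm_nonneg _) (hint j 3)).trans (hcong i 0 hi)
    refine lt_of_le_of_lt ?_ hpn
    refine norm_sub_le_of_both_le (norm_sub_le_of_both_le (hsmall 1 ?_ 2) (hsmall 2 ?_ 1))
      (hsmall 3 ?_ 0) <;> simp [diagExp]
  -- the unit `μ` is a sum of `k 0 0 * k 3 3` and a non-unit
  have h1 : 1 ≤ ‖k 0 0 * k 3 3‖ := by
    by_contra! hlt
    have := (norm_add_le_max _ _).trans_lt (max_lt hlt hrest)
    rw [hrel, hμ] at this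
    exact lt_irrefl _ this
  rw [norm_mul] at h1
  exact le_antisymm (hint 3 3) (h1.trans (mul_le_of_le_one_left (norm_nonneg _) (hint 0 0)))

end Symplectic

section DoubleCoset

variable {p : ℕ} [Fact p.Prime] {m n : ℕ}

theorem norm_apply_zero_le_of_isSimilitude {V : Matrix (Fin 4) (Fin 4) ℚ_[p]} {μ : ℚ_[p]}
    (hV : ∀ i j, ‖V i j‖ ≤ 1) (hVJ : IsSimilitude (Jmat p) μ V) (h33 : ‖V 3 3‖ = 1) {c : ℝ}
    (h03 : ‖V 0 3‖ ≤ c) (h13 : ‖V 1 3‖ ≤ c) (h23 : ‖V 2 3‖ ≤ c) {j : Fin 4}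
    (hj : Jmat p j 3 = 0) : ‖V 0 j‖ ≤ c := by
  have hrel := hVJ.Jmat_apply j 3
  rw [hj, mul_zero] at hrel
  have hb : ∀ i i', ‖V i' 3‖ ≤ c → ‖V i j * V i' 3‖ ≤ c := fun i i' h => by
    rw [norm_mul]
    exact (mul_le_of_le_one_left (norm_nonneg _) (hV i j)).trans h
  calc ‖V 0 j‖ = ‖V 0 j * V 3 3‖ := by rw [norm_mul, h33, mul_one]
    _ = ‖V 2 j * V 1 3 + V 3 j * V 0 3 - V 1 j * V 2 3‖ := by congr 1; linear_combination hrel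
    _ ≤ c := norm_sub_le_of_both_le (norm_add_le_of_both_le (hb 2 1 h13) (hb 3 0 h03)) (hb 1 2 h23)

theorem exists_unipotent_mul_norm_col_three_le (hn : 1 ≤ n) {k : Matrix (Fin 4) (Fin 4) ℚ_[p]}
    (hk : k ∈ Kmn1 p m n) :
    ∃ x < p ^ 2, ∃ y < p ^ 2, ∃ z < p ^ 4,
      ‖(unipotent (-(x : ℚ_[p])) (-(y : ℚ_[p])) (-(z : ℚ_[p])) * k) 0 3‖ ≤ (p : ℝ) ^ (-4 : ℤ) ∧
      ‖(unipotent (-(x : ℚ_[p])) (-(y : ℚ_[p])) (-(z : ℚ_[p])) * k) 1 3‖ ≤ (p : ℝ) ^ (-2 : ℤ) ∧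
      ‖(unipotent (-(x : ℚ_[p])) (-(y : ℚ_[p])) (-(z : ℚ_[p])) * k) 2 3‖ ≤ (p : ℝ) ^ (-2 : ℤ) := by
  have hint := (mem_Kmn1_iff.mp hk).1
  have h33 := norm_apply_three_three_of_mem_Kmn1 hn hk
  have hnat : ∀ (a : ℕ) i j, ‖(a : ℚ_[p]) * k i j‖ ≤ 1 := fun a i j => by
    rw [norm_mul]
    exact mul_le_one₀ (norm_natCast_le_one ℚ_[p] a) (norm_nonneg _) (hint i j)
  obtain ⟨x, hx, hxk⟩ :=
    exists_nat_lt_norm_sub_mul_le (t := -k 2 3) (by rw [norm_neg]; exact hint 2 3) h33 2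
  obtain ⟨y, hy, hyk⟩ := exists_nat_lt_norm_sub_mul_le (hint 1 3) h33 2
  obtain ⟨z, hz, hzk⟩ := exists_nat_lt_norm_sub_mul_le
    (norm_sub_le_of_both_le (norm_sub_le_of_both_le (hint 0 3) (hnat x 1 3)) (hnat y 2 3)) h33 4
  refine ⟨x, hx, y, hy, z, hz, ?_, ?_, ?_⟩
  · calc _ = ‖k 0 3 - x * k 1 3 - y * k 2 3 - z * k 3 3‖ := by
          rw [unipotent_mul_apply_zero]; congr 1; ring
      _ ≤ _ := by exact_mod_cast hzk
  · calc _ = ‖k 1 3 - y * k 3 3‖ := by rw [unipotent_mul_apply_one]; congr 1; ring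
      _ ≤ _ := by exact_mod_cast hyk
  · calc _ = ‖-k 2 3 - x * k 3 3‖ := by rw [unipotent_mul_apply_two, ← norm_neg]; congr 1; ring
      _ ≤ _ := by exact_mod_cast hxk

theorem exists_rep7_mul_eq (hn : 1 ≤ n) {k : Matrix (Fin 4) (Fin 4) ℚ_[p]}
    (hk : k ∈ Kmn1 p m n) :
    ∃ i, ∃ g ∈ Kmn1 p m n, k * powDiag p diagExp = rep7 p i * g := by
  obtain ⟨x, hx, y, hy, z, hz, h03, h13, h23⟩ := exists_unipotent_mul_norm_col_three_le hn hk
  set V := unipotent (-(x : ℚ_[p])) (-(y : ℚ_[p])) (-(z : ℚ_[p])) * k with hVdef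
  have hV : V ∈ Kmn1 p m n := Kmn1.mul_mem (unipotent_mem_Kmn1 (by simp [norm_natCast_le_one])
    (by simp [norm_natCast_le_one]) (by simp [norm_natCast_le_one])) hk
  obtain ⟨hint, -, ⟨μ, -, -, hVJ⟩, -⟩ := mem_Kmn1_iff.mp hV
  have h33 : ‖V 3 3‖ = 1 := by
    rw [hVdef, unipotent_mul_apply_three]; exact norm_apply_three_three_of_mem_Kmn1 hn hk
  have h0j : ∀ j, Jmat p j 3 = 0 → ‖V 0 j‖ ≤ (p : ℝ) ^ (-2 : ℤ) := fun j hj =>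
    norm_apply_zero_le_of_isSimilitude hint hVJ h33
      (h03.trans (zpow_le_zpow_right₀ one_lt_prime_cast.le (by norm_num))) h13 h23 hj
  refine ⟨(⟨x, hx⟩, ⟨y, hy⟩, ⟨z, hz⟩), _, powDiag_conj_mem_Kmn1 hV fun i j hij => ?_, ?_⟩
  · fin_cases i <;> fin_cases j <;> simp [diagExp] at hij ⊢
    exacts [h0j 1 (by simp [Jmat]), h0j 2 (by simp [Jmat]), h03, h13, h23]
  · rw [rep7_eq]
    calc k * powDiag p diagExp
        _ = unipotent (x : ℚ_[p]) y z * (powDiag p diagExp * powDiag p (-diagExp)) * V *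
            powDiag p diagExp := by
          rw [powDiag_mul_powDiag_neg, mul_one, hVdef, ← Matrix.mul_assoc,
            unipotent_mul_unipotent_neg, one_mul]
        _ = _ := by simp only [Matrix.mul_assoc]

theorem eq_of_rep7_mul_eq {i i' : Fin (p ^ 2) × Fin (p ^ 2) × Fin (p ^ 4)}
    {g : Matrix (Fin 4) (Fin 4) ℚ_[p]} (hg : g ∈ Kmn1 p m n) (h : rep7 p i' * g = rep7 p i) :
    i = i' := by
  obtain ⟨⟨x, hx⟩, ⟨y, hy⟩, ⟨z, hz⟩⟩ := i
  obtain ⟨⟨x', hx'⟩, ⟨y', hy'⟩, ⟨z', hz'⟩⟩ := i'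
  rw [rep7_eq, rep7_eq] at h
  dsimp only at h
  have hconj : g = powDiag p (-diagExp) *
      unipotent ((x : ℚ_[p]) - x') (y - y') (z - z' - x' * y + y' * x) * powDiag p diagExp := by
    calc g
        _ = powDiag p (-diagExp) * unipotent (-(x' : ℚ_[p])) (-(y' : ℚ_[p])) (-(z' : ℚ_[p])) *
            (unipotent (x' : ℚ_[p]) y' z' * powDiag p diagExp * g) := by
          simp only [Matrix.mul_assoc]
          rw [← Matrix.mul_assoc (unipotent _ _ _), unipotent_neg_mul_unipotent, one_mul,
            ← Matrix.mul_assoc, powDiag_neg_mul_powDiag, one_mul]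
        _ = _ := by
          rw [h, ← Matrix.mul_assoc, Matrix.mul_assoc (powDiag p _), unipotent_mul_unipotent]
          congr 3 <;> ring
  have hbound : ∀ a b, ‖unipotent ((x : ℚ_[p]) - x') (y - y') (z - z' - x' * y + y' * x) a b‖ ≤
      (p : ℝ) ^ (diagExp b - diagExp a) := fun a b =>
    norm_apply_le_of_norm_powDiag_conj_apply_le_one (hconj ▸ (mem_Kmn1_iff.mp hg).1 a b)
  obtain rfl : x = x' :=
    eq_of_norm_natCast_sub_le hx hx' (by simpa [unipotent, diagExp] using hbound 0 1)
  obtain rfl : y = y' :=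
    eq_of_norm_natCast_sub_le hy hy' (by simpa [unipotent, diagExp] using hbound 0 2)
  obtain rfl : z = z' := eq_of_norm_natCast_sub_le hz hz' (by
    simpa [unipotent, diagExp, mul_comm] using hbound 0 3)
  rfl

theorem Kmn1_mul_powDiag_mul_Kmn1_subset (hn : 1 ≤ n) :
    Kmn1 p m n * {powDiag p diagExp} * Kmn1 p m n ⊆
      ⋃ i : Fin (p ^ 2) × Fin (p ^ 2) × Fin (p ^ 4), {rep7 p i} * Kmn1 p m n := by
  rintro _ ⟨_, ⟨k, hk, _, rfl, rfl⟩, k', hk', rfl⟩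
  obtain ⟨i, g, hg, hkD⟩ := exists_rep7_mul_eq hn hk
  exact Set.mem_iUnion.mpr ⟨i, rep7 p i, rfl, g * k', Kmn1.mul_mem hg hk',
    by dsimp only; rw [hkD, Matrix.mul_assoc]⟩

theorem iUnion_rep7_mul_Kmn1_subset :
    ⋃ i : Fin (p ^ 2) × Fin (p ^ 2) × Fin (p ^ 4), {rep7 p i} * Kmn1 p m n ⊆
      Kmn1 p m n * {powDiag p diagExp} * Kmn1 p m n := by
  refine Set.iUnion_subset fun i => ?_
  rintro _ ⟨_, rfl, k, hk, rfl⟩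
  rw [rep7_eq]
  exact Set.mul_mem_mul (Set.mul_mem_mul (unipotent_mem_Kmn1 (norm_natCast_le_one ℚ_[p] _)
    (norm_natCast_le_one ℚ_[p] _) (norm_natCast_le_one ℚ_[p] _)) rfl) hk

end DoubleCoset

/-- Double coset decomposition of `K^{(1)}_{m,n} · diag(ℓ⁴,ℓ²,ℓ²,1) · K^{(1)}_{m,n}` into
`ℓ⁸` pairwise distinct left cosets. -/
theorem stmt7 (p : ℕ) [Fact p.Prime] (m n : ℕ) (hn : 1 ≤ n) :
    (Kmn1 p m n *
        {Matrix.diagonal ![(p : ℚ_[p]) ^ 4, (p : ℚ_[p]) ^ 2, (p : ℚ_[p]) ^ 2, 1]} *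
          Kmn1 p m n =
      ⋃ i : Fin (p ^ 2) × Fin (p ^ 2) × Fin (p ^ 4),
        ({rep7 p i} : Set (Matrix (Fin 4) (Fin 4) ℚ_[p])) * Kmn1 p m n) ∧
    Function.Injective
      (fun i : Fin (p ^ 2) × Fin (p ^ 2) × Fin (p ^ 4) =>
        ({rep7 p i} : Set (Matrix (Fin 4) (Fin 4) ℚ_[p])) * Kmn1 p m n) := by
  rw [diagonal_eq_powDiag_diagExp]
  refine ⟨(Kmn1_mul_powDiag_mul_Kmn1_subset hn).antisymm iUnion_rep7_mul_Kmn1_subset,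
    fun i i' hii' => ?_⟩
  have hmem : rep7 p i ∈ {rep7 p i'} * Kmn1 p m n := by
    rw [← show {rep7 p i} * Kmn1 p m n = {rep7 p i'} * Kmn1 p m n from hii']
    exact ⟨rep7 p i, rfl, 1, Kmn1.one_mem, mul_one _⟩
  obtain ⟨_, rfl, g, hg, h⟩ := hmem
  exact eq_of_rep7_mul_eq hg h
end
end

section
/- Let ℓ be a prime and T, t, s integers with s ≥ t ≥ T ≥ 0. Let Γ(ℓ^T) = {γ ∈ GL₂(ℤ_ℓ) : γ ≡ I₂ (mod ℓ^T)} denote the principal congruence subgroup of level ℓ^T. Then K₁^{GL₂}(ℓ^T, ℓ^T) = Γ(ℓ^T) · K₁^{GL₂}(ℓ^s, ℓ^t); in other words, every left coset of K₁^{GL₂}(ℓ^s, ℓ^t) in K₁^{GL₂}(ℓ^T, ℓ^T) contains a representative congruent to the identity modulo ℓ^T. -/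
open Pointwise

noncomputable section

/-- `K₁^{GL₂}(ℓ^s, ℓ^t)`: matrices `[[a,b],[c,d]] ∈ GL₂(ℤ_ℓ)` (unit determinant) with
`c ≡ 0 (mod ℓ^s)` and `d ≡ 1 (mod ℓ^t)`. -/
def K1 (p : ℕ) [Fact p.Prime] (s t : ℕ) : Set (Matrix (Fin 2) (Fin 2) ℤ_[p]) :=
  {g | IsUnit g.det ∧ (p : ℤ_[p]) ^ s ∣ g 1 0 ∧ (p : ℤ_[p]) ^ t ∣ (g 1 1 - 1)}

/-- The principal congruence subgroup `Γ(ℓ^T) = {γ ∈ GL₂(ℤ_ℓ) : γ ≡ I₂ (mod ℓ^T)}`. -/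
def Gamma (p : ℕ) [Fact p.Prime] (T : ℕ) : Set (Matrix (Fin 2) (Fin 2) ℤ_[p]) :=
  {γ | IsUnit γ.det ∧ (p : ℤ_[p]) ^ T ∣ (γ 0 0 - 1) ∧ (p : ℤ_[p]) ^ T ∣ γ 0 1 ∧
    (p : ℤ_[p]) ^ T ∣ γ 1 0 ∧ (p : ℤ_[p]) ^ T ∣ (γ 1 1 - 1)}

/-!
If `T > 0`, the lower-left entry `c` of `g = [[a,b],[c,d]] ∈ K₁(ℓ^T, ℓ^T)` lies in the maximal
ideal, so `a` is a unit because `det g` is. Then `g = γ · [[a,b],[0,1]]` with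
`γ = [[1,0],[c/a, d - cb/a]] ≡ I₂ (mod ℓ^T)`, and `[[a,b],[0,1]]` and its inverse lie in every
`K₁(ℓ^s, ℓ^t)`. For `T = 0` both sides are all of `GL₂(ℤ_ℓ)`.
-/

theorem Matrix.isUnit_apply_zero_zero_of_isUnit_det {R : Type*} [CommRing R] [IsLocalRing R]
    {g : Matrix (Fin 2) (Fin 2) R} (hg : IsUnit g.det)
    (hc : g 1 0 ∈ IsLocalRing.maximalIdeal R) : IsUnit (g 0 0) := by
  by_contra ha
  have ha : g 0 0 ∈ IsLocalRing.maximalIdeal R := ha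
  refine (IsLocalRing.mem_maximalIdeal _).mp ?_ hg
  rw [Matrix.det_fin_two]
  exact Ideal.sub_mem _ (Ideal.mul_mem_right _ _ ha) (Ideal.mul_mem_left _ _ hc)

namespace K1

variable {p : ℕ} [Fact p.Prime]

theorem one_mem (s t : ℕ) : (1 : Matrix (Fin 2) (Fin 2) ℤ_[p]) ∈ K1 p s t := by
  simp [K1]

theorem mono {s t s' t' : ℕ} (hs : s' ≤ s) (ht : t' ≤ t) : K1 p s t ⊆ K1 p s' t' :=
  fun _ ⟨hdet, hc, hd⟩ ↦ ⟨hdet, (pow_dvd_pow _ hs).trans hc, (pow_dvd_pow _ ht).trans hd⟩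

theorem mul_mem {s t : ℕ} (hts : t ≤ s) {g h : Matrix (Fin 2) (Fin 2) ℤ_[p]}
    (hg : g ∈ K1 p s t) (hh : h ∈ K1 p s t) : g * h ∈ K1 p s t := by
  obtain ⟨hgdet, hgc, hgd⟩ := hg
  obtain ⟨hhdet, hhc, hhd⟩ := hh
  have hgc' : (p : ℤ_[p]) ^ t ∣ g 1 0 := (pow_dvd_pow _ hts).trans hgc
  refine ⟨by simpa only [Matrix.det_mul] using hgdet.mul hhdet, ?_, ?_⟩
  · simp only [Matrix.mul_apply, Fin.sum_univ_two]
    exact dvd_add (hgc.mul_right _) (hhc.mul_left _)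
  · have : (g * h) 1 1 - 1 = g 1 0 * h 0 1 + (g 1 1 - 1) * h 1 1 + (h 1 1 - 1) := by
      simp only [Matrix.mul_apply, Fin.sum_univ_two]; ring
    rw [this]
    exact dvd_add (dvd_add (hgc'.mul_right _) (hgd.mul_right _)) hhd

theorem upperTriangular_mem (s t : ℕ) {a : ℤ_[p]} (ha : IsUnit a) (b : ℤ_[p]) :
    !![a, b; 0, 1] ∈ K1 p s t := by
  simpa [K1, Matrix.det_fin_two_of] using ha

end K1

namespace Gamma

variable {p : ℕ} [Fact p.Prime]

theorem subset_K1 (T : ℕ) : Gamma p T ⊆ K1 p T T :=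
  fun _ ⟨hdet, _, _, hc, hd⟩ ↦ ⟨hdet, hc, hd⟩

theorem zero_eq_K1 : Gamma p 0 = K1 p 0 0 := by
  ext g
  simp [Gamma, K1]

end Gamma

section Decomposition

variable {p : ℕ} [Fact p.Prime]

theorem K1.exists_mul_mem_Gamma_of_pos {T : ℕ} (hT : 0 < T) (s t : ℕ)
    {g : Matrix (Fin 2) (Fin 2) ℤ_[p]} (hg : g ∈ K1 p T T) :
    ∃ m ∈ K1 p s t, ∃ k ∈ K1 p s t, m * k = 1 ∧ g * m ∈ Gamma p T := by
  obtain ⟨hdet, hc, hd⟩ := hg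
  have hc_max : g 1 0 ∈ IsLocalRing.maximalIdeal ℤ_[p] := by
    rw [PadicInt.maximalIdeal_eq_span_p, Ideal.mem_span_singleton]
    exact (dvd_pow_self _ hT.ne').trans hc
  have ha := Matrix.isUnit_apply_zero_zero_of_isUnit_det hdet hc_max
  obtain ⟨a', ha'⟩ := ha.exists_left_inv
  refine ⟨!![a', -(a' * g 0 1); 0, 1], K1.upperTriangular_mem s t (.of_mul_eq_one _ ha') _,
    !![g 0 0, g 0 1; 0, 1], K1.upperTriangular_mem s t ha _, ?_, ?_⟩
  · rw [Matrix.mul_fin_two, Matrix.one_fin_two]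
    congr 1
    simp [ha']
  · have hγ : g * !![a', -(a' * g 0 1); 0, 1] =
        !![1, 0; g 1 0 * a', g 1 1 - g 1 0 * a' * g 0 1] := by
      ext i j
      fin_cases i <;> fin_cases j <;> simp [Matrix.mul_apply, Fin.sum_univ_two]
      · linear_combination ha'
      · linear_combination (-g 0 1) * ha'
      · ring
    have hdet' : IsUnit (g * !![a', -(a' * g 0 1); 0, 1]).det := by
      rw [Matrix.det_mul]
      exact hdet.mul (by simpa [Matrix.det_fin_two_of] using IsUnit.of_mul_eq_one _ ha')
    rw [hγ] at hdet' ⊢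
    refine ⟨hdet', by simp, by simp, by simpa using hc.mul_right a', ?_⟩
    simpa [sub_right_comm] using hd.sub ((hc.mul_right a').mul_right (g 0 1))

theorem K1.exists_mul_mem_Gamma {T : ℕ} (s t : ℕ)
    {g : Matrix (Fin 2) (Fin 2) ℤ_[p]} (hg : g ∈ K1 p T T) :
    ∃ m ∈ K1 p s t, ∃ k ∈ K1 p s t, m * k = 1 ∧ g * m ∈ Gamma p T := by
  rcases T.eq_zero_or_pos with rfl | hT
  · exact ⟨1, K1.one_mem s t, 1, K1.one_mem s t, mul_one 1, by rwa [mul_one, Gamma.zero_eq_K1]⟩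
  · exact K1.exists_mul_mem_Gamma_of_pos hT s t hg

end Decomposition

/-- For `s ≥ t ≥ T ≥ 0`, `K₁^{GL₂}(ℓ^T, ℓ^T) = Γ(ℓ^T) · K₁^{GL₂}(ℓ^s, ℓ^t)`; i.e. every
left `K₁^{GL₂}(ℓ^s, ℓ^t)`-coset in `K₁^{GL₂}(ℓ^T, ℓ^T)` has a representative congruent to
the identity modulo `ℓ^T`. -/
theorem stmt19 (p : ℕ) [Fact p.Prime] (T t s : ℕ) (hTt : T ≤ t) (hts : t ≤ s) :
    K1 p T T = Gamma p T * K1 p s t ∧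
    ∀ g ∈ K1 p T T, ∃ γ ∈ Gamma p T, γ ∈ ({g} : Set (Matrix (Fin 2) (Fin 2) ℤ_[p])) * K1 p s t := by
  refine ⟨subset_antisymm ?_ ?_, ?_⟩
  · intro g hg
    obtain ⟨m, -, k, hk, hmk, hγ⟩ := K1.exists_mul_mem_Gamma s t hg
    have hg_eq : g = g * m * k := by rw [mul_assoc, hmk, mul_one]
    exact hg_eq ▸ Set.mul_mem_mul hγ hk
  · rintro _ ⟨γ, hγ, k, hk, rfl⟩
    exact K1.mul_mem le_rfl (Gamma.subset_K1 T hγ) (K1.mono (hTt.trans hts) hTt hk)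
  · intro g hg
    obtain ⟨m, hm, -, -, -, hγ⟩ := K1.exists_mul_mem_Gamma s t hg
    exact ⟨g * m, hγ, Set.mul_mem_mul rfl hm⟩
end
end
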